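/- arXiv:2504.09399 — 2 statements merged into one kernel-verified Lean document; each statement's English description precedes it below -/
import Mathlib

section
/- Every threshold bigraph is a 2-rainbow threshold graph. Precisely: let H = X ∪ Y be a bipartite graph with parts X, Y, a linear order ≤ on H, and a function α : H → {0,1}, such that there are no edges within X or within Y, and for z₀ < z₁ in H lying in different parts, (z₀, z₁) is an edge iff α(z₁) = 1. Define the 2-rainbow sequence (a, e) by: a(z) = 0 iff z ∈ X; a(z) ∉ e(z); and (1 − a(z)) ∈ e(z) iff α(z) = 1. Then the rainbow threshold graph of (a, e) with respect to ≤ equals H. -/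
/-- Rainbow threshold graph (set-of-colors version, general color type). -/
def rainGraph {X K : Type*} [LinearOrder X] (a : X → K) (e : X → Set K) :
    SimpleGraph X where
  Adj x y := (x < y ∧ a x ∈ e y) ∨ (y < x ∧ a y ∈ e x)
  symm := ⟨by intro x y h; tauto⟩
  loopless := ⟨by rintro x (⟨h, -⟩ | ⟨h, -⟩) <;> exact absurd h (lt_irrefl x)⟩

/-!
Both graphs are determined by their adjacencies `z₀ < z₁`, and for those both reduce to
"`z₀` and `z₁` have different colours and `α z₁ = 1`": in the rainbow graph because
`a z₁ ∉ e z₁` leaves `1 - a z₁` as the only colour `e z₁` may contain, in the bigraph because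
the colour `a` records the part.
-/

theorem SimpleGraph.ext_of_lt {V : Type*} [LinearOrder V] {G G' : SimpleGraph V}
    (h : ∀ x y, x < y → (G.Adj x y ↔ G'.Adj x y)) : G = G' := by
  ext x y
  rcases lt_trichotomy x y with hxy | rfl | hxy
  · exact h x y hxy
  · simp
  · rw [G.adj_comm, G'.adj_comm]
    exact h y x hxy

theorem rainGraph_adj_of_lt {V K : Type*} [LinearOrder V] {a : V → K} {e : V → Set K}
    {x y : V} (hxy : x < y) : (rainGraph a e).Adj x y ↔ a x ∈ e y := by
  simp [rainGraph, hxy, hxy.not_gt]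

theorem Fin.two_eq_one_sub_of_ne {i j : Fin 2} (h : i ≠ j) : i = 1 - j := by
  omega

theorem rainGraph_adj_of_lt_of_notMem {V : Type*} [LinearOrder V] {a : V → Fin 2}
    {e : V → Set (Fin 2)} (hae : ∀ z, a z ∉ e z) {x y : V} (hxy : x < y) :
    (rainGraph a e).Adj x y ↔ a x ≠ a y ∧ 1 - a y ∈ e y := by
  rw [rainGraph_adj_of_lt hxy]
  constructor
  · intro hx
    have hne : a x ≠ a y := fun h => hae y (h ▸ hx)
    exact ⟨hne, Fin.two_eq_one_sub_of_ne hne ▸ hx⟩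
  · rintro ⟨hne, hy⟩
    rwa [Fin.two_eq_one_sub_of_ne hne]

theorem SimpleGraph.adj_iff_of_lt_of_coloring {V κ : Type*} [LinearOrder V] {G : SimpleGraph V}
    (c : V → κ) (p : V → Prop) (hsame : ∀ x y, c x = c y → ¬ G.Adj x y)
    (hcross : ∀ x y, x < y → c x ≠ c y → (G.Adj x y ↔ p y)) {x y : V} (hxy : x < y) :
    G.Adj x y ↔ c x ≠ c y ∧ p y := by
  by_cases hc : c x = c y
  · simp [hc, hsame x y hc]
  · simp [hc, hcross x y hxy hc]

theorem threshold_bigraph_is_two_rainbow {H : Type*} [LinearOrder H]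
    (X Y : Set H) (hcover : X ∪ Y = Set.univ) (hdisj : X ∩ Y = ∅)
    (G : SimpleGraph H) (α : H → Fin 2)
    (hX : ∀ z₀ z₁, z₀ ∈ X → z₁ ∈ X → ¬ G.Adj z₀ z₁)
    (hY : ∀ z₀ z₁, z₀ ∈ Y → z₁ ∈ Y → ¬ G.Adj z₀ z₁)
    (hcross : ∀ z₀ z₁, z₀ < z₁ → (z₀ ∈ X ↔ z₁ ∈ Y) →
      (G.Adj z₀ z₁ ↔ α z₁ = 1))
    (a : H → Fin 2) (e : H → Set (Fin 2))
    (ha : ∀ z, a z = 0 ↔ z ∈ X)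
    (hae : ∀ z, a z ∉ e z)
    (he : ∀ z, (1 - a z) ∈ e z ↔ α z = 1) :
    rainGraph a e = G := by
  have hXY : Xᶜ = Y := (IsCompl.of_eq hdisj hcover).compl_eq
  have hYa : ∀ z, z ∈ Y ↔ a z ≠ 0 := fun z => by rw [← hXY, Set.mem_compl_iff, ← ha]
  have hsame : ∀ z₀ z₁, a z₀ = a z₁ → ¬ G.Adj z₀ z₁ := by
    intro z₀ z₁ h
    by_cases h₀ : a z₀ = 0
    · exact hX z₀ z₁ ((ha z₀).1 h₀) ((ha z₁).1 (h ▸ h₀))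
    · exact hY z₀ z₁ ((hYa z₀).2 h₀) ((hYa z₁).2 (h ▸ h₀))
  have hdiff : ∀ z₀ z₁, a z₀ ≠ a z₁ → (z₀ ∈ X ↔ z₁ ∈ Y) := by
    intro z₀ z₁ h
    rw [← ha, hYa]
    omega
  refine SimpleGraph.ext_of_lt fun z₀ z₁ h => ?_
  rw [rainGraph_adj_of_lt_of_notMem hae h, he,
    G.adj_iff_of_lt_of_coloring a (α · = 1) hsame (fun x y hxy hc => hcross x y hxy (hdiff x y hc)) h]
end

section
/- Suppose n and ℓ satisfy ⌊n/ℓ⌋ ≥ (k+1)·2^{k+1}·(k+1+2^{k+1}). Then no ℓ-good (k+1)-rainbow threshold graph on Fin n is isomorphic to a k-rainbow threshold graph on Fin n. -/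
/-!
In a `k`-rainbow threshold graph the trace on `X` of a vertex `u ∉ X` depends only on the type
`(a u, e u)` and on which elements of `X` lie below `u`; for a fixed type only the elements of `X`
that are switches for it matter, so the traces of that type are at most one more than the number
of switches. Each vertex is a switch for exactly half of the `k * 2 ^ k` types, which bounds the
number of traces by `k * 2 ^ k * (1 + #X / 2)`.

In an `ℓ`-good `(k+1)`-rainbow sequence every type occurs in every block, so one can choose
`4 (k+1)` probe vertices and, in the gaps between them, vertices of every type containing a fixed
colour at `2k+3` positions, all with distinct traces. This gives `(k+1) 2^k (2k+3)` traces, more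
than the bound `k 2^k (2k+3)`, while an isomorphism preserves the number of traces.
-/

/-- Rainbow threshold graph with finsets of colors. -/
def rseqGraph {n k : ℕ} (a : Fin n → Fin k) (e : Fin n → Finset (Fin k)) :
    SimpleGraph (Fin n) where
  Adj x y := (x < y ∧ a x ∈ e y) ∨ (y < x ∧ a y ∈ e x)
  symm := ⟨by intro x y h; tauto⟩
  loopless := ⟨by rintro x (⟨h, -⟩ | ⟨h, -⟩) <;> exact absurd h (lt_irrefl x)⟩

instance {n k : ℕ} (a : Fin n → Fin k) (e : Fin n → Finset (Fin k)) :
    DecidableRel (rseqGraph a e).Adj := fun x y =>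
  inferInstanceAs (Decidable ((x < y ∧ a x ∈ e y) ∨ (y < x ∧ a y ∈ e x)))

open scoped Classical in
/-- The set of k-rainbow threshold graphs on `Fin n`. -/
noncomputable def RainGraph (k n : ℕ) : Finset (SimpleGraph (Fin n)) :=
  Finset.image (fun S : (Fin n → Fin k) × (Fin n → Finset (Fin k)) =>
    rseqGraph S.1 S.2) Finset.univ

def ellGood {n : ℕ} (k ℓ : ℕ) (a : Fin n → Fin k) (e : Fin n → Finset (Fin k)) : Prop :=
  ∀ r ≤ n / ℓ - 3, ∀ s : Fin k × Finset (Fin k),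
    ∃ c : Fin n, (r + 1) * ℓ ≤ c.val ∧ c.val < (r + 2) * ℓ ∧ (a c, e c) = s

open Finset

section Counting
variable {α β : Type*} [Fintype α] [DecidableEq α] [Fintype β]

theorem two_mul_card_filter_mem_iff (t : α) (Q : Prop) [Decidable Q] :
    2 * #{E : Finset α | t ∈ E ↔ Q} = 2 ^ Fintype.card α := by
  have hmem (E : Finset α) : t ∈ symmDiff E {t} ↔ t ∉ E := by simp [mem_symmDiff]
  have hflip : #{E : Finset α | t ∈ E ↔ Q} = #{E : Finset α | ¬(t ∈ E ↔ Q)} := by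
    refine card_nbij' (symmDiff · {t}) (symmDiff · {t}) ?_ ?_
      (fun E _ => symmDiff_symmDiff_cancel_right {t} E)
      (fun E _ => symmDiff_symmDiff_cancel_right {t} E) <;>
    · intro E hE
      simp only [coe_filter, mem_univ, true_and, Set.mem_ofPred_eq, hmem] at hE ⊢
      tauto
  rw [two_mul]
  nth_rw 2 [hflip]
  rw [card_filter_add_card_filter_not, card_univ, Fintype.card_finset]

theorem two_mul_card_filter_prod_mem_iff (t : α) (Q : β → Prop) [DecidablePred Q] :
    2 * #{p : β × Finset α | t ∈ p.2 ↔ Q p.1} = Fintype.card β * 2 ^ Fintype.card α := by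
  rw [card_filter, Fintype.sum_prod_type, mul_sum]
  simp_rw [← card_filter, two_mul_card_filter_mem_iff]
  simp

end Counting

theorem Finset.card_image_filter_lt_le {α : Type*} [LinearOrder α] (S U : Finset α) :
    #(U.image fun u => S.filter (· < u)) ≤ #S + 1 := by
  have hsub : U.image (fun u => S.filter (· < u)) ⊆
      insert ∅ (S.image fun y => S.filter (· ≤ y)) := by
    rintro _ hL
    obtain ⟨u, -, rfl⟩ := mem_image.1 hL
    rcases (S.filter (· < u)).eq_empty_or_nonempty with hempty | hne
    · exact hempty ▸ mem_insert_self _ _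
    refine mem_insert_of_mem (mem_image.2 ⟨_, (mem_filter.1 (max'_mem _ hne)).1, ?_⟩)
    ext v
    simp only [mem_filter, and_congr_right_iff]
    intro hv
    exact ⟨fun hvy => hvy.trans_lt (mem_filter.1 (max'_mem _ hne)).2,
      fun hvu => le_max' _ v (mem_filter.2 ⟨hv, hvu⟩)⟩
  calc #(U.image fun u => S.filter (· < u))
      ≤ #(insert ∅ (S.image fun y => S.filter (· ≤ y))) := card_le_card hsub
    _ ≤ #S + 1 := (card_insert_le _ _).trans (Nat.add_le_add_right card_image_le 1)

section RseqGraph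

variable {n k : ℕ} (a : Fin n → Fin k) (e : Fin n → Finset (Fin k))

theorem rseqGraph_adj_of_lt {x y : Fin n} (h : x < y) :
    (rseqGraph a e).Adj x y ↔ a x ∈ e y := by
  simp [rseqGraph, h, h.not_gt]

theorem rseqGraph_adj_of_gt {x y : Fin n} (h : y < x) :
    (rseqGraph a e).Adj x y ↔ a y ∈ e x := by
  simp [rseqGraph, h, h.not_gt]

end RseqGraph

section Traces

variable {V W : Type*} [Fintype V] [DecidableEq V] [Fintype W] [DecidableEq W]

def SimpleGraph.neighborTraces (G : SimpleGraph V) [DecidableRel G.Adj] (X : Finset V) :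
    Finset (Finset V) :=
  Xᶜ.image fun v => X.filter (G.Adj v)

theorem SimpleGraph.Iso.card_neighborTraces_map {G : SimpleGraph V} {G' : SimpleGraph W}
    [DecidableRel G.Adj] [DecidableRel G'.Adj] (φ : G ≃g G') (X : Finset V) :
    #(G'.neighborTraces (X.map φ.toEquiv.toEmbedding)) = #(G.neighborTraces X) := by
  set f := φ.toEquiv.toEmbedding
  have hcompl : (X.map f)ᶜ = Xᶜ.map f := by
    ext w
    obtain ⟨v, rfl⟩ := φ.surjective w
    simp [f]
  have htrace (u : V) : (X.map f).filter (G'.Adj (φ u)) = (X.filter (G.Adj u)).map f := by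
    ext w
    obtain ⟨v, rfl⟩ := φ.surjective w
    have hfv : φ v = f v := rfl
    rw [hfv, mem_filter, mem_map' f, mem_map' f, mem_filter, ← hfv, φ.map_adj_iff]
  have : G'.neighborTraces (X.map f) = (G.neighborTraces X).image (Finset.map f) := by
    rw [neighborTraces, neighborTraces, image_image, hcompl, map_eq_image f Xᶜ, image_image]
    exact image_congr fun u _ => htrace u
  rw [this, card_image_of_injective _ (Finset.map_injective f)]

end Traces

section Upper

variable {n k : ℕ} (a : Fin n → Fin k) (e : Fin n → Finset (Fin k))

/-- Moving `v` from above to below a vertex of type `p` toggles whether the two are adjacent. -/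
abbrev IsSwitch (p : Fin k × Finset (Fin k)) (v : Fin n) : Prop :=
  ¬(a v ∈ p.2 ↔ p.1 ∈ e v)

theorem two_mul_card_isSwitch (v : Fin n) : 2 * #{p | IsSwitch a e p v} = k * 2 ^ k := by
  have := two_mul_card_filter_prod_mem_iff (a v) (fun c => c ∉ e v)
  simp only [Fintype.card_fin] at this
  rw [← this]
  congr 3
  ext p
  simp only [IsSwitch, not_iff]
  tauto

/-- The trace on `X` of a vertex of type `p` lying above exactly the elements `L` of `X`. -/
def traceShape (X : Finset (Fin n)) (p : Fin k × Finset (Fin k)) (L : Finset (Fin n)) :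
    Finset (Fin n) :=
  X.filter fun v => if v ∈ L then a v ∈ p.2 else p.1 ∈ e v

theorem filter_adj_eq_traceShape {X : Finset (Fin n)} {u : Fin n} (hu : u ∉ X) :
    X.filter ((rseqGraph a e).Adj u) =
      traceShape a e X (a u, e u) ({v ∈ X | IsSwitch a e (a u, e u) v}.filter (· < u)) := by
  refine filter_congr fun v hv => ?_
  rcases (ne_of_mem_of_not_mem hv hu).lt_or_gt with hvu | huv
  · rw [rseqGraph_adj_of_gt a e hvu]
    by_cases hs : IsSwitch a e (a u, e u) v
    · simp [hv, hs, hvu]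
    · simp only [IsSwitch, not_not] at hs
      split_ifs <;> simp [hs]
  · rw [rseqGraph_adj_of_lt a e huv]
    simp [huv.not_gt]

theorem two_mul_card_neighborTraces_rseqGraph_le (X : Finset (Fin n)) :
    2 * #((rseqGraph a e).neighborTraces X) ≤ k * 2 ^ k * (#X + 2) := by
  set S : Fin k × Finset (Fin k) → Finset (Fin n) := fun p => {v ∈ X | IsSwitch a e p v}
  have hcover : (rseqGraph a e).neighborTraces X ⊆
      univ.biUnion fun p =>
        (univ.image fun u => (S p).filter (· < u)).image (traceShape a e X p) := by
    intro T hT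
    obtain ⟨u, hu, rfl⟩ := mem_image.1 hT
    refine mem_biUnion.2 ⟨(a u, e u), mem_univ _, ?_⟩
    exact mem_image.2 ⟨_, mem_image_of_mem _ (mem_univ u),
      (filter_adj_eq_traceShape a e (mem_compl.1 hu)).symm⟩
  have hdouble : ∑ p, #(S p) = ∑ v ∈ X, #{p | IsSwitch a e p v} := by
    simp only [S, card_filter]
    exact sum_comm
  calc 2 * #((rseqGraph a e).neighborTraces X)
      ≤ 2 * ∑ p : Fin k × Finset (Fin k), (#(S p) + 1) := by
        gcongr
        refine (card_le_card hcover).trans (card_biUnion_le.trans (sum_le_sum fun p _ => ?_))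
        exact card_image_le.trans (card_image_filter_lt_le _ _)
    _ = ∑ v ∈ X, 2 * #{p | IsSwitch a e p v} + 2 * (k * 2 ^ k) := by
        simp [sum_add_distrib, mul_add, hdouble, mul_sum, Fintype.card_finset]
    _ = k * 2 ^ k * (#X + 2) := by
        simp only [two_mul_card_isSwitch, sum_const, smul_eq_mul]
        ring

end Upper

section Lower

variable {n j : ℕ} {a : Fin n → Fin j} {e : Fin n → Finset (Fin j)}

structure IsPlacement (a : Fin n → Fin j) (e : Fin n → Finset (Fin j)) (R : ℕ)
    (v : ℕ → Fin j × Finset (Fin j) → Fin n) : Prop where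
  a_eq : ∀ r ≤ R, ∀ s, a (v r s) = s.1
  e_eq : ∀ r ≤ R, ∀ s, e (v r s) = s.2
  lt : ∀ r r' s s', r < r' → r' ≤ R → v r s < v r' s'

theorem ellGood.exists_isPlacement {ℓ : ℕ} (hgood : ellGood j ℓ a e) :
    ∃ v, IsPlacement a e (n / ℓ - 3) v := by
  have hblock : ∀ r s, ∃ c : Fin n, r ≤ n / ℓ - 3 →
      (r + 1) * ℓ ≤ c ∧ c < (r + 2) * ℓ ∧ (a c, e c) = s := by
    intro r s
    by_cases hr : r ≤ n / ℓ - 3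
    · obtain ⟨c, hc⟩ := hgood r hr s
      exact ⟨c, fun _ => hc⟩
    · obtain ⟨c, -⟩ := hgood 0 (Nat.zero_le _) s
      exact ⟨c, fun h => absurd h hr⟩
  choose v hv using hblock
  refine ⟨v, ⟨fun r hr s => (Prod.ext_iff.1 (hv r s hr).2.2).1,
    fun r hr s => (Prod.ext_iff.1 (hv r s hr).2.2).2, fun r r' s s' hrr' hr' => ?_⟩⟩
  have hlt := (hv r s (hrr'.le.trans hr')).2.1
  have hge := (hv r' s' hr').1
  have : (r + 2) * ℓ ≤ (r' + 1) * ℓ := Nat.mul_le_mul_right ℓ (by omega)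
  exact Fin.lt_def.2 (by omega)

/-- The trace of `v (2i+1) s`, for `c₀ ∈ s.2` and `i ≤ 2j`, on these probes gives back `s.2`
(from block `0`), `i` (from the blocks `2d+2`) and `s.1` (from block `4j+2`). -/
def probes (v : ℕ → Fin j × Finset (Fin j) → Fin n) (c₀ : Fin j) : Finset (Fin n) :=
  univ.image (fun t => v 0 (t, ∅)) ∪
    (range (2 * j)).image (fun d => v (2 * d + 2) (c₀, ∅)) ∪
    univ.image fun t => v (4 * j + 2) (c₀, {t})

theorem card_probes_le (v : ℕ → Fin j × Finset (Fin j) → Fin n) (c₀ : Fin j) :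
    #(probes v c₀) ≤ 4 * j := by
  grw [probes, card_union_le, card_union_le, card_image_le, card_image_le, card_image_le]
  simp
  omega

namespace IsPlacement

variable {R : ℕ} {v : ℕ → Fin j × Finset (Fin j) → Fin n}

theorem mono {R' : ℕ} (hv : IsPlacement a e R' v) (hR : R ≤ R') : IsPlacement a e R v :=
  ⟨fun r hr => hv.a_eq r (hr.trans hR), fun r hr => hv.e_eq r (hr.trans hR),
    fun r r' s s' h hr' => hv.lt r r' s s' h (hr'.trans hR)⟩

theorem ne (hv : IsPlacement a e R v) {r r' : ℕ} (hr : r ≤ R) (hr' : r' ≤ R) (hne : r ≠ r')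
    (s s' : Fin j × Finset (Fin j)) : v r s ≠ v r' s' := by
  rcases hne.lt_or_gt with h | h
  · exact (hv.lt r r' s s' h hr').ne
  · exact (hv.lt r' r s' s h hr).ne'

theorem adj_iff (hv : IsPlacement a e R v) {r r' : ℕ} (hr : r ≤ R) (hr' : r' ≤ R)
    (hne : r ≠ r') (s s' : Fin j × Finset (Fin j)) :
    (rseqGraph a e).Adj (v r s) (v r' s') ↔ if r' < r then s'.1 ∈ s.2 else s.1 ∈ s'.2 := by
  split_ifs with h
  · rw [rseqGraph_adj_of_gt a e (hv.lt _ _ _ _ h hr), hv.a_eq r' hr', hv.e_eq r hr]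
  · rw [rseqGraph_adj_of_lt a e (hv.lt _ _ _ _ (by omega) hr'), hv.a_eq r hr, hv.e_eq r' hr']

theorem notMem_probes (hv : IsPlacement a e (4 * j + 2) v) (c₀ : Fin j) {i : ℕ}
    (hi : i ≤ 2 * j) (s : Fin j × Finset (Fin j)) : v (2 * i + 1) s ∉ probes v c₀ := by
  intro hmem
  simp only [probes, mem_union, mem_image, mem_univ, true_and, mem_range] at hmem
  rcases hmem with (⟨t, ht⟩ | ⟨d, hd, ht⟩) | ⟨t, ht⟩ <;>
    exact hv.ne (by omega) (by omega) (by omega) _ _ ht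

theorem injOn_filter_adj_probes (hv : IsPlacement a e (4 * j + 2) v) (c₀ : Fin j) :
    Set.InjOn (fun q : (Fin j × Finset (Fin j)) × ℕ =>
        (probes v c₀).filter ((rseqGraph a e).Adj (v (2 * q.2 + 1) q.1)))
      ↑(({s : Fin j × Finset (Fin j) | c₀ ∈ s.2} : Finset _) ×ˢ range (2 * j + 1)) := by
  rintro ⟨s, i⟩ hsi ⟨s', i'⟩ hsi' heq
  simp only [coe_product, Set.mem_prod, mem_coe, mem_filter, mem_univ, true_and, mem_range]
    at hsi hsi'
  have hsame := fun x (hx : x ∈ probes v c₀) => (filter_inj'.1 heq) hx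
  have hi : i = i' := by
    by_contra hne
    have hmin := hsame _ (mem_union_left _ (mem_union_right _
      (mem_image_of_mem _ (mem_range.2 (show min i i' < 2 * j by omega)))))
    rw [hv.adj_iff (by omega) (by omega) (by omega), hv.adj_iff (by omega) (by omega) (by omega)]
      at hmin
    simp [hsi.1, hsi'.1] at hmin
    omega
  subst hi
  have h2 : s.2 = s'.2 := by
    ext t
    have := hsame (v 0 (t, ∅)) (by simp [probes])
    rwa [hv.adj_iff (by omega) (by omega) (by omega), hv.adj_iff (by omega) (by omega) (by omega),
      if_pos (by omega), if_pos (by omega)] at this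
  have h1 : s.1 = s'.1 := by
    have := hsame (v (4 * j + 2) (c₀, {s.1})) (by simp [probes])
    rw [hv.adj_iff (by omega) le_rfl (by omega), hv.adj_iff (by omega) le_rfl (by omega),
      if_neg (by omega), if_neg (by omega)] at this
    simpa [eq_comm] using this
  simp [Prod.ext_iff, h1, h2]

theorem exists_le_two_mul_card_neighborTraces (hv : IsPlacement a e (4 * j + 2) v)
    (c₀ : Fin j) : ∃ X : Finset (Fin n), #X ≤ 4 * j ∧
      j * 2 ^ j * (2 * j + 1) ≤ 2 * #((rseqGraph a e).neighborTraces X) := by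
  refine ⟨probes v c₀, card_probes_le v c₀, ?_⟩
  have hcount := two_mul_card_filter_prod_mem_iff c₀ (fun _ : Fin j => True)
  simp only [iff_true, Fintype.card_fin] at hcount
  calc j * 2 ^ j * (2 * j + 1)
      = 2 * #(({s : Fin j × Finset (Fin j) | c₀ ∈ s.2} : Finset _) ×ˢ
          range (2 * j + 1)) := by
        rw [card_product, card_range, ← mul_assoc, hcount]
    _ ≤ 2 * #((rseqGraph a e).neighborTraces (probes v c₀)) := by
        refine Nat.mul_le_mul_left 2 (card_le_card_of_injOn _ ?_ (hv.injOn_filter_adj_probes c₀))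
        rintro ⟨s, i⟩ hsi
        simp only [coe_product, Set.mem_prod, mem_coe, mem_range] at hsi
        exact mem_image.2 ⟨_, mem_compl.2 (hv.notMem_probes c₀ (by omega) s), rfl⟩

end IsPlacement

end Lower

theorem good_succ_rainbow_not_isomorphic_to_rainbow (k n ℓ : ℕ)
    (h : (k + 1) * 2 ^ (k + 1) * (k + 1 + 2 ^ (k + 1)) ≤ n / ℓ)
    (a : Fin n → Fin (k + 1)) (e : Fin n → Finset (Fin (k + 1)))
    (hgood : ellGood (k + 1) ℓ a e)
    (a' : Fin n → Fin k) (e' : Fin n → Finset (Fin k)) :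
    ¬ Nonempty (rseqGraph a e ≃g rseqGraph a' e') := by
  rintro ⟨φ⟩
  have hn : 0 < n := Nat.pos_of_ne_zero fun hn0 => by simp [hn0] at h
  obtain rfl | hk := Nat.eq_zero_or_pos k
  · exact (a' ⟨0, hn⟩).elim0
  have hblocks : 4 * (k + 1) + 2 ≤ n / ℓ - 3 := by
    have h4 : 4 ≤ 2 ^ (k + 1) := Nat.pow_le_pow_right two_pos (by omega : 2 ≤ k + 1)
    have : 4 * k + 9 ≤ (k + 1) * 2 ^ (k + 1) * (k + 1 + 2 ^ (k + 1)) :=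
      calc 4 * k + 9 ≤ (k + 1) * 4 * (k + 1 + 4) := by nlinarith
        _ ≤ _ := by gcongr
    omega
  obtain ⟨v, hv⟩ := hgood.exists_isPlacement
  obtain ⟨X, hX, hlow⟩ := (hv.mono hblocks).exists_le_two_mul_card_neighborTraces 0
  have hup := two_mul_card_neighborTraces_rseqGraph_le a' e' (X.map φ.toEquiv.toEmbedding)
  rw [φ.card_neighborTraces_map, card_map] at hup
  have : (k + 1) * (2 ^ (k + 1) * (2 * k + 3)) ≤ k * (2 ^ (k + 1) * (2 * k + 3)) :=
    calc (k + 1) * (2 ^ (k + 1) * (2 * k + 3))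
        = (k + 1) * 2 ^ (k + 1) * (2 * (k + 1) + 1) := by ring
      _ ≤ k * 2 ^ k * (#X + 2) := hlow.trans hup
      _ ≤ k * 2 ^ k * (4 * (k + 1) + 2) := by gcongr
      _ = k * (2 ^ (k + 1) * (2 * k + 3)) := by ring
  exact absurd (Nat.le_of_mul_le_mul_right this (by positivity)) (by omega)
end
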